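/- arXiv:1703.01334 — 4 statements merged into one kernel-verified Lean document; each statement's English description precedes it below -/
import Mathlib

section
/- Assume every vertex of 𝕋 has degree at least κ₀ + 1 with κ₀ ≥ 2. Then every flow function φ_{u,j}^(ε) is square-summable, i.e. φ_{u,j}^(ε) ∈ ℓ²(A), and the norms are uniformly bounded: sup over all u ∈ V, j ∈ {1, …, m(u)−1} and ε ∈ {+1, −1} of ‖φ_{u,j}^(ε)‖ is finite. -/
/- Setting: 𝕋 = (V,A) an infinite, locally finite tree. Vertices `V`, arcs = darts of a
simple graph `G`; `e.fst` = origin, `e.snd` = terminus, `e.symm` = reversed arc.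
ℓ²(A) and ℓ²(V) are the `lp _ 2` spaces. The boundary operators, the shift and the
Grover walk are characterized by their pointwise formulas. -/

noncomputable section
open scoped ComplexConjugate ComplexInnerProductSpace Classical
open Complex Filter Topology ContinuousLinearMap

namespace GroverStmt

/-- ℓ²(V) -/
abbrev lV (V : Type) : Type := lp (fun _ : V => ℂ) 2

variable {V : Type} (G : SimpleGraph V)

/-- ℓ²(A) where A is the set of symmetric arcs (darts) of `G`. -/
abbrev lA : Type := lp (fun _ : G.Dart => ℂ) 2

section deg
variable [∀ v : V, Fintype (G.neighborSet v)]

/-- `(d_T ψ)(u) = Σ_{e : t(e)=u} ψ(e)/√(deg u)` -/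
def IsBoundaryT (dT : lA G →L[ℂ] lV V) : Prop :=
  ∀ (ψ : lA G) (u : V),
    dT ψ u = ∑' e : {e : G.Dart // e.snd = u}, ψ e.1 / (Real.sqrt (G.degree u) : ℂ)

/-- `(d_O ψ)(u) = Σ_{e : o(e)=u} ψ(e)/√(deg u)` -/
def IsBoundaryO (dO : lA G →L[ℂ] lV V) : Prop :=
  ∀ (ψ : lA G) (u : V),
    dO ψ u = ∑' e : {e : G.Dart // e.fst = u}, ψ e.1 / (Real.sqrt (G.degree u) : ℂ)

end deg

/-- `(Sψ)(e) = ψ(ē)` -/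
def IsShift (S : lA G →L[ℂ] lA G) : Prop :=
  ∀ (ψ : lA G) (e : G.Dart), S ψ e = ψ e.symm

/-- the Grover walk `U = S (2 d_T* d_T − 1)` -/
def grover (S : lA G →L[ℂ] lA G) (dT : lA G →L[ℂ] lV V) : lA G →L[ℂ] lA G :=
  S ∘L ((2 : ℂ) • ((adjoint dT) ∘L dT) - 1)

variable (o : V)

/-- `v` is a descendant of `u` (w.r.t. the root `o`). -/
def desc (u v : V) : Prop := G.dist o v = G.dist o u + G.dist u v

/-- `e` is an arc pointing away from `u` inside the subtree of descendants of `u`. -/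
def awayIn (u : V) (e : G.Dart) : Prop :=
  desc G o u e.fst ∧ desc G o u e.snd ∧ G.dist u e.fst < G.dist u e.snd

section flows
variable [∀ v : V, Fintype (G.neighborSet v)]

/-- `m(u)`: the number of children of `u`. -/
def m (u : V) : ℕ := if u = o then G.degree u else G.degree u - 1

/-- `En u : Fin (m u) → Dart` is an enumeration `e_0^(u), …, e_{m(u)-1}^(u)` of the arcs
from `u` to its children. -/
def IsChildEnum (En : ∀ u : V, Fin (m G o u) → G.Dart) : Prop :=
  ∀ u : V,
    Function.Injective (En u) ∧
    (∀ k, (En u k).fst = u ∧ G.dist o (En u k).snd = G.dist o u + 1) ∧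
    (∀ e : G.Dart, e.fst = u → G.dist o e.snd = G.dist o u + 1 → ∃ k, En u k = e)

/-- the defining properties of the flow function `φ_{u,j}^(ε) : A → ℂ`. -/
def IsFlow (En : ∀ u : V, Fin (m G o u) → G.Dart)
    (u : V) (j : ℕ) (ε : ℂ) (φ : G.Dart → ℂ) : Prop :=
  (∀ k : Fin (m G o u),
      φ (En u k) =
        Complex.exp (2 * Real.pi * Complex.I * j / (m G o u)) ^ (k : ℕ) / (m G o u)) ∧
  (∀ e : G.Dart, awayIn G o u e → e.fst ≠ u →
     ∀ f : G.Dart, awayIn G o u f → f.snd = e.fst →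
       φ e = ε * φ f / (m G o e.fst)) ∧
  (∀ e : G.Dart, awayIn G o u e → φ e.symm = -ε * φ e) ∧
  (∀ e : G.Dart, ¬(desc G o u e.fst ∧ desc G o u e.snd) → φ e = 0)

end flows



section Aux
variable {V : Type} {G : SimpleGraph V}

lemma aux_dist_getVert_le (hconn : G.Connected) (u v : V) (P : G.Walk u v) :
    ∀ i, G.dist u (P.getVert i) ≤ i := by
  intro i
  induction i with
  | zero => simp [SimpleGraph.Walk.getVert_zero]
  | succ i ih =>
    rcases le_or_gt P.length i with h | h
    · rw [P.getVert_of_length_le (h.trans (Nat.le_succ i)), ← P.getVert_of_length_le h]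
      omega
    · have hadj := P.adj_getVert_succ h
      have h1 := hconn.dist_triangle (u := u) (v := P.getVert i) (w := P.getVert (i+1))
      rw [SimpleGraph.dist_eq_one_iff_adj.mpr hadj] at h1
      omega

lemma aux_exists_parent (hconn : G.Connected) {u w : V} {n : ℕ} (h : G.dist u w = n + 1) :
    ∃ p : V, G.Adj p w ∧ G.dist u p = n := by
  obtain ⟨P, hPl⟩ := hconn.exists_walk_length_eq_dist u w
  have hgv : P.getVert (n+1) = w := by rw [← h, ← hPl]; exact P.getVert_length
  have hadj : G.Adj (P.getVert n) w := by
    have := P.adj_getVert_succ (i := n) (by omega)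
    rwa [hgv] at this
  refine ⟨P.getVert n, hadj, ?_⟩
  have h1 := aux_dist_getVert_le hconn u w P n
  have h2 := hconn.dist_triangle (u := u) (v := P.getVert n) (w := w)
  rw [SimpleGraph.dist_eq_one_iff_adj.mpr hadj] at h2
  omega

lemma aux_dist_ne_of_adj (hG : G.IsTree) {u a b : V} (hab : G.Adj a b) :
    G.dist u a ≠ G.dist u b := by
  intro h
  obtain ⟨P, hP, hPl⟩ := hG.isConnected.exists_path_of_dist u a
  obtain ⟨Q, hQ, hQl⟩ := hG.isConnected.exists_path_of_dist u b
  have hb : b ∉ P.support := by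
    intro hmem
    have h1 : G.dist u b ≤ (P.takeUntil b hmem).length := G.dist_le _
    have h2 : G.dist b a ≤ (P.dropUntil b hmem).length := G.dist_le _
    have h3 : (P.takeUntil b hmem).length + (P.dropUntil b hmem).length = P.length := by
      have h4 := congrArg SimpleGraph.Walk.length (P.take_spec hmem)
      rwa [SimpleGraph.Walk.length_append] at h4
    have hba : G.dist b a = 0 := by omega
    have hba' : b = a := (hG.isConnected.dist_eq_zero_iff).mp hba
    exact G.irrefl (hba' ▸ hab)
  have hb' : b ∉ P.reverse.support := by
    rwa [SimpleGraph.Walk.support_reverse, List.mem_reverse]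
  have hpath : (SimpleGraph.Walk.cons hab.symm P.reverse).IsPath :=
    SimpleGraph.Walk.IsPath.cons hP.reverse hb'
  have heq := (hG.existsUnique_path b u).unique hpath hQ.reverse
  have hlen := congrArg SimpleGraph.Walk.length heq
  rw [SimpleGraph.Walk.length_cons, SimpleGraph.Walk.length_reverse,
    SimpleGraph.Walk.length_reverse] at hlen
  omega

lemma aux_dist_le_succ_of_adj (hconn : G.Connected) {u a b : V} (hab : G.Adj a b) :
    G.dist u b ≤ G.dist u a + 1 := by
  have := hconn.dist_triangle (u := u) (v := a) (w := b)
  rwa [SimpleGraph.dist_eq_one_iff_adj.mpr hab] at this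

/-- a choice of parent dart -/
noncomputable def pdart (G : SimpleGraph V) (u : V) (e : G.Dart) : G.Dart :=
  if h : ∃ f : G.Dart, f.snd = e.fst ∧ G.dist u f.fst + 1 = G.dist u e.fst then h.choose else e

lemma pdart_spec (hconn : G.Connected) {u : V} {e : G.Dart} {n : ℕ}
    (hd : G.dist u e.fst = n + 1) :
    (pdart G u e).snd = e.fst ∧ G.dist u (pdart G u e).fst = n := by
  have hex : ∃ f : G.Dart, f.snd = e.fst ∧ G.dist u f.fst + 1 = G.dist u e.fst := by
    obtain ⟨p, hadj, hp⟩ := aux_exists_parent hconn hd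
    refine ⟨⟨(p, e.fst), hadj⟩, rfl, ?_⟩
    show G.dist u p + 1 = G.dist u e.fst
    rw [hp, hd]
  rw [pdart, dif_pos hex]
  obtain ⟨h1, h2⟩ := hex.choose_spec
  exact ⟨h1, by omega⟩

lemma pdart_away (hconn : G.Connected) {o u : V} {e : G.Dart} {n : ℕ}
    (he : awayIn G o u e) (hd : G.dist u e.fst = n + 1) :
    awayIn G o u (pdart G u e) ∧ (pdart G u e).snd = e.fst ∧
      G.dist u (pdart G u e).fst = n := by
  obtain ⟨hs, hf⟩ := pdart_spec hconn hd
  set f := pdart G u e with hfdef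
  obtain ⟨hd1, hd2, hlt⟩ := he
  have hadj : G.Adj f.fst e.fst := hs ▸ f.adj
  have hup : G.dist o f.fst ≤ G.dist o u + n := by
    have := hconn.dist_triangle (u := o) (v := u) (w := f.fst)
    omega
  have hlow : G.dist o u + (n + 1) ≤ G.dist o f.fst + 1 := by
    have h5 := aux_dist_le_succ_of_adj hconn (u := o) hadj
    rw [desc] at hd1
    omega
  have hdescf : desc G o u f.fst := by
    rw [desc, hf]; omega
  refine ⟨⟨hdescf, ?_, ?_⟩, hs, hf⟩
  · rw [hs]; exact hd1
  · rw [hs, hf, hd]; omega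

end Aux

theorem flow_finsum_le {V : Type} (G : SimpleGraph V) [∀ v : V, Fintype (G.neighborSet v)]
    (hG : G.IsTree) (o : V)
    (κ₀ : ℕ) (hκ : 2 ≤ κ₀) (hdeg : ∀ v : V, κ₀ + 1 ≤ G.degree v)
    (En : ∀ u : V, Fin (m G o u) → G.Dart)
    (hEn : ∀ u : V,
      Function.Injective (En u) ∧
      (∀ k, (En u k).fst = u ∧ G.dist o (En u k).snd = G.dist o u + 1) ∧
      (∀ e : G.Dart, e.fst = u → G.dist o e.snd = G.dist o u + 1 → ∃ k, En u k = e))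
    (u : V) (j : ℕ) (ε : ℂ) (φ : G.Dart → ℂ)
    (hf1 : ∀ k : Fin (m G o u),
      φ (En u k) =
        Complex.exp (2 * Real.pi * Complex.I * j / (m G o u)) ^ (k : ℕ) / (m G o u))
    (hf2 : ∀ e : G.Dart, awayIn G o u e → e.fst ≠ u →
     ∀ f : G.Dart, awayIn G o u f → f.snd = e.fst →
       φ e = ε * φ f / (m G o e.fst))
    (hf3 : ∀ e : G.Dart, awayIn G o u e → φ e.symm = -ε * φ e)
    (hf4 : ∀ e : G.Dart, ¬(desc G o u e.fst ∧ desc G o u e.snd) → φ e = 0)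
    (hε : ε = 1 ∨ ε = -1) :
    ∀ s : Finset G.Dart, ∑ e ∈ s, ‖φ e‖ ^ 2 ≤ 2 := by
  have hconn := hG.isConnected
  have hm2 : ∀ v : V, 2 ≤ m G o v := by
    intro v; have := hdeg v; rw [m]; split <;> omega
  have hεn : ‖ε‖ = 1 := by rcases hε with h | h <;> simp [h]
  -- per-level bound
  have key : ∀ n : ℕ, ∀ t : Finset G.Dart,
      (∀ e ∈ t, awayIn G o u e ∧ G.dist u e.fst = n) →
      ∑ e ∈ t, ‖φ e‖ ^ 2 ≤ (1/2 : ℝ) ^ (n+1) := by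
    intro n
    induction n with
    | zero =>
      intro t ht
      have hek : ∀ e ∈ t, ∃ k : Fin (m G o u), En u k = e := by
        intro e he
        obtain ⟨⟨hd1, hd2, hlt⟩, h0⟩ := ht e he
        have hfst : e.fst = u := ((hconn.dist_eq_zero_iff).mp h0).symm
        have hsnd1 : G.dist u e.snd = 1 := by
          have := aux_dist_le_succ_of_adj hconn (u := u) e.adj
          omega
        have hds : G.dist o e.snd = G.dist o u + 1 := by
          rw [desc] at hd2; omega
        exact (hEn u).2.2 e hfst hds
      have hmpos : (0:ℝ) < (m G o u : ℝ) := by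
        have := hm2 u; positivity
      have hval : ∀ e ∈ t, ‖φ e‖ ^ 2 = (1 / (m G o u : ℝ)) ^ 2 := by
        intro e he
        obtain ⟨k, hk⟩ := hek e he
        rw [← hk, hf1 k, norm_div, norm_pow]
        have hz : (2 * (Real.pi:ℂ) * Complex.I * j / (m G o u)) =
            ((2 * Real.pi * j / (m G o u) : ℝ) : ℂ) * Complex.I := by
          push_cast; ring
        rw [hz, Complex.norm_exp_ofReal_mul_I, one_pow, Complex.norm_natCast]
      rw [Finset.sum_congr rfl hval, Finset.sum_const, nsmul_eq_mul]
      have hcard : t.card ≤ m G o u := by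
        have hsub : t ⊆ Finset.image (En u) Finset.univ := by
          intro e he
          obtain ⟨k, hk⟩ := hek e he
          exact Finset.mem_image.mpr ⟨k, Finset.mem_univ _, hk⟩
        calc t.card ≤ (Finset.image (En u) Finset.univ).card := Finset.card_le_card hsub
          _ ≤ (Finset.univ : Finset (Fin (m G o u))).card := Finset.card_image_le
          _ = m G o u := by simp
      have h2m : (2:ℝ) ≤ (m G o u : ℝ) := by exact_mod_cast hm2 u
      calc (t.card : ℝ) * (1 / (m G o u : ℝ)) ^ 2
          ≤ (m G o u : ℝ) * (1 / (m G o u : ℝ)) ^ 2 := by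
            apply mul_le_mul_of_nonneg_right _ (by positivity)
            exact_mod_cast hcard
        _ = 1 / (m G o u : ℝ) := by field_simp
        _ ≤ (1/2 : ℝ) ^ (0+1) := by
            rw [pow_one]
            rw [div_le_div_iff₀ hmpos (by norm_num)]
            linarith
    | succ n ih =>
      intro t ht
      have hmapsto : ∀ e ∈ t, pdart G u e ∈ t.image (pdart G u) :=
        fun e he => Finset.mem_image_of_mem _ he
      rw [← Finset.sum_fiberwise_of_maps_to hmapsto (fun e => ‖φ e‖ ^ 2)]
      set T := t.image (pdart G u) with hT
      have hTprop : ∀ f ∈ T, awayIn G o u f ∧ G.dist u f.fst = n := by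
        intro f hfm
        obtain ⟨e, he, hpe⟩ := Finset.mem_image.mp hfm
        obtain ⟨haw, hd⟩ := ht e he
        obtain ⟨h1, h2, h3⟩ := pdart_away hconn haw hd
        exact hpe ▸ ⟨h1, h3⟩
      have hfiber : ∀ f ∈ T, (∑ e ∈ t.filter (fun e => pdart G u e = f), ‖φ e‖ ^ 2)
          ≤ (1/2 : ℝ) * ‖φ f‖ ^ 2 := by
        intro f hfm
        obtain ⟨hawf, hdf⟩ := hTprop f hfm
        have hmpos : (0:ℝ) < (m G o f.snd : ℝ) := by
          have := hm2 f.snd; positivity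
        have hval : ∀ e ∈ t.filter (fun e => pdart G u e = f),
            ‖φ e‖ ^ 2 = ‖φ f‖ ^ 2 / (m G o f.snd : ℝ) ^ 2 := by
          intro e hem
          obtain ⟨he, hpe⟩ := Finset.mem_filter.mp hem
          obtain ⟨haw, hd⟩ := ht e he
          obtain ⟨hsnd, -⟩ := pdart_spec hconn (e := e) hd
          rw [hpe] at hsnd
          have hfu : e.fst ≠ u := by
            intro hh
            rw [hh, SimpleGraph.dist_self] at hd
            omega
          have := hf2 e haw hfu f hawf hsnd
          rw [this, norm_div, norm_mul, hεn, one_mul, Complex.norm_natCast,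
            div_pow, hsnd]
        rw [Finset.sum_congr rfl hval, Finset.sum_const, nsmul_eq_mul]
        have hcard : (t.filter (fun e => pdart G u e = f)).card ≤ m G o f.snd := by
          have hinj : Set.InjOn (fun e : G.Dart => e.snd)
              (t.filter (fun e => pdart G u e = f)) := by
            intro e1 h1 e2 h2 hsnd12
            obtain ⟨he1, hp1⟩ := Finset.mem_filter.mp h1
            obtain ⟨he2, hp2⟩ := Finset.mem_filter.mp h2
            have hs1 : (pdart G u e1).snd = e1.fst := (pdart_spec hconn (ht e1 he1).2).1
            have hs2 : (pdart G u e2).snd = e2.fst := (pdart_spec hconn (ht e2 he2).2).1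
            rw [hp1] at hs1; rw [hp2] at hs2
            exact SimpleGraph.Dart.ext e1 e2 (Prod.ext (by rw [← hs1, ← hs2]) hsnd12)
          have hmem : ∀ e ∈ t.filter (fun e => pdart G u e = f),
              e.snd ∈ (G.neighborFinset f.snd).erase f.fst := by
            intro e hem
            obtain ⟨he, hpe⟩ := Finset.mem_filter.mp hem
            obtain ⟨haw, hd⟩ := ht e he
            have hs : (pdart G u e).snd = e.fst := (pdart_spec hconn hd).1
            rw [hpe] at hs
            refine Finset.mem_erase.mpr ⟨?_, ?_⟩
            · intro hh
              have h1 : G.dist u e.snd ≤ G.dist u f.fst := by rw [hh]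
              have h2 := haw.2.2
              omega
            · rw [SimpleGraph.mem_neighborFinset, hs]
              exact e.adj
          calc (t.filter (fun e => pdart G u e = f)).card
              ≤ ((G.neighborFinset f.snd).erase f.fst).card :=
                Finset.card_le_card_of_injOn _ hmem hinj
            _ = G.degree f.snd - 1 := by
                rw [Finset.card_erase_of_mem
                  ((SimpleGraph.mem_neighborFinset _ _ _).mpr f.adj.symm),
                  SimpleGraph.card_neighborFinset_eq_degree]
            _ ≤ m G o f.snd := by
                have := hdeg f.snd; rw [m]; split <;> omega
        have h2m : (2:ℝ) ≤ (m G o f.snd : ℝ) := by exact_mod_cast hm2 f.snd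
        calc ((t.filter (fun e => pdart G u e = f)).card : ℝ)
              * (‖φ f‖ ^ 2 / (m G o f.snd : ℝ) ^ 2)
            ≤ (m G o f.snd : ℝ) * (‖φ f‖ ^ 2 / (m G o f.snd : ℝ) ^ 2) := by
              apply mul_le_mul_of_nonneg_right _ (by positivity)
              exact_mod_cast hcard
          _ = ‖φ f‖ ^ 2 / (m G o f.snd : ℝ) := by field_simp
          _ ≤ ‖φ f‖ ^ 2 / 2 := by
              apply div_le_div_of_nonneg_left (by positivity) (by norm_num) h2m
          _ = (1/2 : ℝ) * ‖φ f‖ ^ 2 := by ring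
      calc (∑ f ∈ T, ∑ e ∈ t.filter (fun e => pdart G u e = f), ‖φ e‖ ^ 2)
          ≤ ∑ f ∈ T, (1/2 : ℝ) * ‖φ f‖ ^ 2 := Finset.sum_le_sum hfiber
        _ = (1/2 : ℝ) * ∑ f ∈ T, ‖φ f‖ ^ 2 := by rw [Finset.mul_sum]
        _ ≤ (1/2 : ℝ) * (1/2 : ℝ) ^ (n+1) := by
            apply mul_le_mul_of_nonneg_left (ih T hTprop) (by norm_num)
        _ = (1/2 : ℝ) ^ (n+1+1) := by ring
  -- all-away bound
  have away_total : ∀ t : Finset G.Dart, (∀ e ∈ t, awayIn G o u e) →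
      ∑ e ∈ t, ‖φ e‖ ^ 2 ≤ 1 := by
    intro t ht
    set N := t.sup (fun e => G.dist u e.fst) with hN
    have hmapsto : ∀ e ∈ t, G.dist u e.fst ∈ Finset.range (N+1) := by
      intro e he
      exact Finset.mem_range.mpr (Nat.lt_succ_of_le (Finset.le_sup (f := fun e => G.dist u e.fst) he))
    rw [← Finset.sum_fiberwise_of_maps_to hmapsto (fun e => ‖φ e‖ ^ 2)]
    have hgeom : ∀ K : ℕ, ∑ n ∈ Finset.range K, (1/2 : ℝ) ^ (n+1) = 1 - (1/2) ^ K := by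
      intro K
      induction K with
      | zero => simp
      | succ K ihK => rw [Finset.sum_range_succ, ihK]; ring
    calc (∑ n ∈ Finset.range (N+1), ∑ e ∈ t.filter (fun e => G.dist u e.fst = n), ‖φ e‖ ^ 2)
        ≤ ∑ n ∈ Finset.range (N+1), (1/2 : ℝ) ^ (n+1) := by
          apply Finset.sum_le_sum
          intro n _
          apply key n
          intro e hem
          obtain ⟨he, hd⟩ := Finset.mem_filter.mp hem
          exact ⟨ht e he, hd⟩
      _ = 1 - (1/2 : ℝ) ^ (N+1) := hgeom (N+1)
      _ ≤ 1 := by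
          have : (0:ℝ) ≤ (1/2 : ℝ) ^ (N+1) := by positivity
          linarith
  -- classification
  have hsymmnorm : ∀ e : G.Dart, awayIn G o u e.symm → ‖φ e‖ = ‖φ e.symm‖ := by
    intro e haw
    have := hf3 e.symm haw
    rw [SimpleGraph.Dart.symm_symm] at this
    rw [this, norm_mul, norm_neg, hεn, one_mul]
  have classify : ∀ e : G.Dart, ¬ awayIn G o u e → φ e ≠ 0 → awayIn G o u e.symm := by
    intro e hne hphi
    by_cases hd : desc G o u e.fst ∧ desc G o u e.snd
    · have hned : G.dist u e.fst ≠ G.dist u e.snd := aux_dist_ne_of_adj hG (u := u) e.adj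
      rcases lt_or_gt_of_ne hned with h | h
      · exact absurd ⟨hd.1, hd.2, h⟩ hne
      · exact ⟨hd.2, hd.1, h⟩
    · exact absurd (hf4 e hd) hphi
  -- final assembly
  intro s
  rw [← Finset.sum_filter_add_sum_filter_not s (fun e => awayIn G o u e)]
  have h1 : ∑ e ∈ s.filter (fun e => awayIn G o u e), ‖φ e‖ ^ 2 ≤ 1 := by
    apply away_total
    intro e he
    exact (Finset.mem_filter.mp he).2
  have h2 : ∑ e ∈ s.filter (fun e => ¬ awayIn G o u e), ‖φ e‖ ^ 2 ≤ 1 := by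
    set t2 := s.filter (fun e => ¬ awayIn G o u e) with ht2
    have hstep : ∑ e ∈ t2.filter (fun e => awayIn G o u e.symm), ‖φ e‖ ^ 2
        = ∑ e ∈ t2, ‖φ e‖ ^ 2 := by
      apply Finset.sum_filter_of_ne
      intro e he hne0
      have hnaw : ¬ awayIn G o u e := (Finset.mem_filter.mp he).2
      have hphi : φ e ≠ 0 := by
        intro hh; rw [hh] at hne0; simp at hne0
      exact classify e hnaw hphi
    rw [← hstep]
    set t3 := t2.filter (fun e => awayIn G o u e.symm) with ht3
    have hrw : ∑ e ∈ t3, ‖φ e‖ ^ 2 = ∑ f ∈ t3.image SimpleGraph.Dart.symm, ‖φ f‖ ^ 2 := by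
      rw [Finset.sum_image]
      · apply Finset.sum_congr rfl
        intro e he
        rw [hsymmnorm e (Finset.mem_filter.mp he).2]
      · intro x _ y _ hxy
        exact SimpleGraph.Dart.symm_involutive.injective hxy
    rw [hrw]
    apply away_total
    intro f hf
    obtain ⟨e, he, hfe⟩ := Finset.mem_image.mp hf
    exact hfe ▸ (Finset.mem_filter.mp he).2
  linarith


/-- if every degree is at least `κ₀ + 1` with `κ₀ ≥ 2`, then every flow
function `φ_{u,j}^(ε)` is square summable and the ℓ²-norms are uniformly bounded. -/
theorem statement1 {V : Type} (G : SimpleGraph V) [∀ v : V, Fintype (G.neighborSet v)]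
    (hG : G.IsTree) [Infinite V] (o : V)
    (κ₀ : ℕ) (hκ : 2 ≤ κ₀) (hdeg : ∀ v : V, κ₀ + 1 ≤ G.degree v)
    (En : ∀ u : V, Fin (m G o u) → G.Dart) (hEn : IsChildEnum G o En)
    (Φ : V → ℕ → ℂ → G.Dart → ℂ)
    (hΦ : ∀ (u : V) (j : ℕ) (ε : ℂ), 1 ≤ j → j ≤ m G o u - 1 → (ε = 1 ∨ ε = -1) →
      IsFlow G o En u j ε (Φ u j ε)) :
    (∀ (u : V) (j : ℕ) (ε : ℂ), 1 ≤ j → j ≤ m G o u - 1 → (ε = 1 ∨ ε = -1) →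
      Memℓp (Φ u j ε) 2) ∧
    ∃ C : ℝ, ∀ (u : V) (j : ℕ) (ε : ℂ), 1 ≤ j → j ≤ m G o u - 1 → (ε = 1 ∨ ε = -1) →
      Real.sqrt (∑' e : G.Dart, ‖Φ u j ε e‖ ^ 2) ≤ C := by
  have main : ∀ (u : V) (j : ℕ) (ε : ℂ), 1 ≤ j → j ≤ m G o u - 1 → (ε = 1 ∨ ε = -1) →
      ∀ s : Finset G.Dart, ∑ e ∈ s, ‖Φ u j ε e‖ ^ 2 ≤ 2 := by
    intro u j ε hj1 hj2 hε
    have h := hΦ u j ε hj1 hj2 hε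
    unfold IsFlow at h
    obtain ⟨hf1, hf2, hf3, hf4⟩ := h
    have hEn' := hEn
    unfold IsChildEnum at hEn'
    exact flow_finsum_le G hG o κ₀ hκ hdeg En hEn' u j ε (Φ u j ε) hf1 hf2 hf3 hf4 hε
  have hpt : (2 : ENNReal).toReal = 2 := by simp
  have hmem : ∀ (u : V) (j : ℕ) (ε : ℂ), 1 ≤ j → j ≤ m G o u - 1 → (ε = 1 ∨ ε = -1) →
      Memℓp (Φ u j ε) 2 := by
    intro u j ε hj1 hj2 hε
    apply memℓp_gen' (C := 2)
    intro s
    calc ∑ e ∈ s, ‖Φ u j ε e‖ ^ (2 : ENNReal).toReal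
        = ∑ e ∈ s, ‖Φ u j ε e‖ ^ 2 := by
          apply Finset.sum_congr rfl; intro e _
          rw [hpt, show ((2:ℝ)) = ((2:ℕ):ℝ) by norm_num, Real.rpow_natCast]
      _ ≤ 2 := main u j ε hj1 hj2 hε s
  refine ⟨hmem, Real.sqrt 2, ?_⟩
  intro u j ε hj1 hj2 hε
  have hsum : Summable (fun e : G.Dart => ‖Φ u j ε e‖ ^ 2) := by
    have h2 := (hmem u j ε hj1 hj2 hε).summable (p := 2) (by rw [hpt]; norm_num)
    have heq : (fun e : G.Dart => ‖Φ u j ε e‖ ^ (2 : ENNReal).toReal)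
        = (fun e : G.Dart => ‖Φ u j ε e‖ ^ 2) := by
      funext e
      rw [hpt, show ((2:ℝ)) = ((2:ℕ):ℝ) by norm_num, Real.rpow_natCast]
    rwa [heq] at h2
  have htsum : ∑' e : G.Dart, ‖Φ u j ε e‖ ^ 2 ≤ 2 :=
    Summable.tsum_le_of_sum_le hsum (main u j ε hj1 hj2 hε)
  calc Real.sqrt (∑' e : G.Dart, ‖Φ u j ε e‖ ^ 2) ≤ Real.sqrt 2 := Real.sqrt_le_sqrt htsum
    _ = Real.sqrt 2 := rfl

end GroverStmt
end
end

section
/- Assume every vertex of 𝕋 has degree at least κ₀ + 1 with κ₀ ≥ 2. Then the family of flow functions { φ_{u,j}^(ε) : u ∈ V, j ∈ {1, …, m(u)−1}, ε ∈ {+1, −1} } is linearly independent in ℓ²(A). -/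
/- Setting: 𝕋 = (V,A) an infinite, locally finite tree. Vertices `V`, arcs = darts of a
simple graph `G`; `e.fst` = origin, `e.snd` = terminus, `e.symm` = reversed arc.
ℓ²(A) and ℓ²(V) are the `lp _ 2` spaces. The boundary operators, the shift and the
Grover walk are characterized by their pointwise formulas. -/

noncomputable section
open scoped ComplexConjugate ComplexInnerProductSpace Classical
open Complex Filter Topology ContinuousLinearMap

namespace GroverStmt

variable {V : Type} (G : SimpleGraph V)

variable (o : V)

/-- Discrete Fourier orthogonality: if a linear combination of distinct characters
`k ↦ exp(2πi j k / M)` vanishes for all `k < M`, all coefficients vanish. -/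
lemma fourier_aux {ι : Type*} (s : Finset ι) (M : ℕ) (hM : 0 < M) (J : ι → ℕ)
    (hJ : ∀ i ∈ s, J i < M)
    (hinj : ∀ i ∈ s, ∀ i' ∈ s, J i = J i' → i = i')
    (c : ι → ℂ)
    (h : ∀ k : ℕ, k < M →
      ∑ i ∈ s, c i * Complex.exp (2 * Real.pi * Complex.I * (J i) / M) ^ k = 0) :
    ∀ i ∈ s, c i = 0 := by
  intro i₀ hi₀
  have hMc : (M : ℂ) ≠ 0 := Nat.cast_ne_zero.mpr hM.ne'
  set ω : ℂ := Complex.exp (2 * Real.pi * Complex.I / M) with hω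
  have hprim : IsPrimitiveRoot ω M := Complex.isPrimitiveRoot_exp M hM.ne'
  have hζ : ∀ j : ℕ, Complex.exp (2 * Real.pi * Complex.I * j / M) = ω ^ j := by
    intro j
    rw [hω, ← Complex.exp_nat_mul]
    ring_nf
  have hω0 : ω ≠ 0 := Complex.exp_ne_zero _
  have hgeom : ∀ i ∈ s, ∑ k ∈ Finset.range M, (ω ^ J i * (ω ^ J i₀)⁻¹) ^ k
      = if i = i₀ then (M : ℂ) else 0 := by
    intro i hi
    by_cases hii : i = i₀
    · subst hii
      rw [if_pos rfl, mul_inv_cancel₀ (pow_ne_zero _ hω0)]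
      simp
    · rw [if_neg hii]
      have hx : ω ^ J i * (ω ^ J i₀)⁻¹ = ω ^ ((J i : ℤ) - (J i₀ : ℤ)) := by
        rw [zpow_sub₀ hω0, zpow_natCast, zpow_natCast, div_eq_mul_inv]
      have hx1 : ω ^ J i * (ω ^ J i₀)⁻¹ ≠ 1 := by
        rw [hx]
        intro h1
        rw [hprim.zpow_eq_one_iff_dvd] at h1
        obtain ⟨t, ht⟩ := h1
        have h1 : J i < M := hJ i hi
        have h2 : J i₀ < M := hJ i₀ hi₀
        have h3 : J i ≠ J i₀ := fun hJJ => hii (hinj i hi i₀ hi₀ hJJ)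
        rcases lt_trichotomy t 0 with h4 | h4 | h4
        · have h5 : (M : ℤ) * t ≤ -M := by nlinarith [hM]
          have h6 : (J i : ℤ) - (J i₀ : ℤ) ≤ -M := ht ▸ h5
          omega
        · rw [h4, mul_zero] at ht; omega
        · have h5 : (M : ℤ) ≤ M * t := by nlinarith [hM]
          have h6 : (M : ℤ) ≤ (J i : ℤ) - (J i₀ : ℤ) := ht ▸ h5
          omega
      have hxM : (ω ^ J i * (ω ^ J i₀)⁻¹) ^ M = 1 := by
        rw [hx, ← zpow_natCast, ← zpow_mul, mul_comm, zpow_mul, zpow_natCast,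
          hprim.pow_eq_one, one_zpow]
      rw [geom_sum_eq hx1, hxM]
      simp
  have h' : ∀ k ∈ Finset.range M, ∑ i ∈ s, c i * (ω ^ J i) ^ k = 0 := by
    intro k hk
    have h0 := h k (Finset.mem_range.mp hk)
    rw [← h0]
    exact Finset.sum_congr rfl fun i _ => by rw [hζ]
  have swap : ∑ i ∈ s, c i * ∑ k ∈ Finset.range M, (ω ^ J i * (ω ^ J i₀)⁻¹) ^ k = 0 := by
    have e1 : ∀ i ∈ s, c i * ∑ k ∈ Finset.range M, (ω ^ J i * (ω ^ J i₀)⁻¹) ^ k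
        = ∑ k ∈ Finset.range M, ((ω ^ J i₀)⁻¹) ^ k * (c i * (ω ^ J i) ^ k) := by
      intro i _
      rw [Finset.mul_sum]
      exact Finset.sum_congr rfl fun k _ => by rw [mul_pow]; ring
    rw [Finset.sum_congr rfl e1, Finset.sum_comm]
    apply Finset.sum_eq_zero
    intro k hk
    rw [← Finset.mul_sum, h' k hk, mul_zero]
  rw [Finset.sum_congr rfl (fun i hi => by rw [hgeom i hi])] at swap
  rw [Finset.sum_eq_single_of_mem i₀ hi₀ (fun i _ hii => by rw [if_neg hii, mul_zero]),
    if_pos rfl] at swap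
  exact (mul_eq_zero.mp swap).resolve_right hMc

/-- extracting the part of a vanishing combination with a fixed sign `σ`. -/
lemma combine_aux {ι : Type*} (s : Finset ι) (g ε z : ι → ℂ) (σ : ℂ) (hσ : σ = 1 ∨ σ = -1)
    (hε : ∀ i ∈ s, ε i = 1 ∨ ε i = -1)
    (h1 : ∑ i ∈ s, g i * z i = 0)
    (h2 : ∑ i ∈ s, g i * (-(ε i) * z i) = 0) :
    ∑ i ∈ s.filter (fun i => ε i = σ), g i * z i = 0 := by
  have key : ∑ i ∈ s, g i * ((1 + σ * ε i) / 2) * z i = 0 := by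
    have e : ∑ i ∈ s, g i * ((1 + σ * ε i) / 2) * z i
        = (1 / 2) * ∑ i ∈ s, g i * z i - (σ / 2) * ∑ i ∈ s, g i * (-(ε i) * z i) := by
      rw [Finset.mul_sum, Finset.mul_sum, ← Finset.sum_sub_distrib]
      exact Finset.sum_congr rfl fun i _ => by ring
    rw [e, h1, h2]
    ring
  rw [← Finset.sum_filter_add_sum_filter_not s (fun i => ε i = σ)] at key
  have hz : ∑ i ∈ s.filter (fun i => ¬ ε i = σ), g i * ((1 + σ * ε i) / 2) * z i = 0 := by
    apply Finset.sum_eq_zero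
    intro i hi
    obtain ⟨his, hine⟩ := Finset.mem_filter.mp hi
    have hεi := hε i his
    rcases hσ with h | h <;> rcases hεi with h' | h'
    · exact absurd (h'.trans h.symm) hine
    · rw [h, h']; ring
    · rw [h, h']; ring
    · exact absurd (h'.trans h.symm) hine
  rw [hz, add_zero] at key
  rw [← key]
  apply Finset.sum_congr rfl
  intro i hi
  have hεi : ε i = σ := (Finset.mem_filter.mp hi).2
  rcases hσ with h | h <;> rw [hεi, h] <;> ring


/-- if every degree is at least `κ₀ + 1` with `κ₀ ≥ 2`, the family of
flow functions `{φ_{u,j}^(ε) : u ∈ V, 1 ≤ j ≤ m(u)−1, ε ∈ {+1,−1}}` is linearly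
independent (equivalently, linearly independent in ℓ²(A), since they are square
summable and ℓ²(A) → (A → ℂ) is an injective linear map). -/
theorem statement2 {V : Type} (G : SimpleGraph V) [∀ v : V, Fintype (G.neighborSet v)]
    (hG : G.IsTree) [Infinite V] (o : V)
    (κ₀ : ℕ) (hκ : 2 ≤ κ₀) (hdeg : ∀ v : V, κ₀ + 1 ≤ G.degree v)
    (En : ∀ u : V, Fin (m G o u) → G.Dart) (hEn : IsChildEnum G o En)
    (Φ : V → ℕ → ℂ → G.Dart → ℂ)
    (hΦ : ∀ (u : V) (j : ℕ) (ε : ℂ), 1 ≤ j → j ≤ m G o u - 1 → (ε = 1 ∨ ε = -1) →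
      IsFlow G o En u j ε (Φ u j ε)) :
    LinearIndependent ℂ
      (fun p : {p : V × ℕ × ℂ //
          1 ≤ p.2.1 ∧ p.2.1 ≤ m G o p.1 - 1 ∧ (p.2.2 = 1 ∨ p.2.2 = -1)} =>
        (Φ p.1.1 p.1.2.1 p.1.2.2 : G.Dart → ℂ)) := by
  rw [linearIndependent_iff']
  intro s g hsum
  by_contra hcon
  push_neg at hcon
  obtain ⟨p₁, hp₁s, hp₁⟩ := hcon
  classical
  set T := s.filter (fun p => g p ≠ 0) with hT
  have hTne : T.Nonempty := ⟨p₁, Finset.mem_filter.mpr ⟨hp₁s, hp₁⟩⟩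
  obtain ⟨p₀, hp₀T, hmin⟩ := T.exists_min_image (fun p => G.dist o p.1.1) hTne
  obtain ⟨hp₀s, hg₀⟩ := Finset.mem_filter.mp hp₀T
  set u : V := p₀.1.1 with hu
  set M : ℕ := m G o u with hM
  have hm2 : 2 ≤ M := by
    have := hdeg u
    rw [hM]
    unfold m
    split <;> omega
  have hMc : (M : ℂ) ≠ 0 := Nat.cast_ne_zero.mpr (by omega)
  have hconn : G.Connected := hG.isConnected
  -- minimality: any vertex in `T` of which `u` is a descendant equals `u`
  have descEq : ∀ p ∈ T, desc G o p.1.1 u → p.1.1 = u := by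
    intro p hp hd
    have h1 : G.dist o u ≤ G.dist o p.1.1 := hmin p hp
    unfold desc at hd
    have h2 : G.dist p.1.1 u = 0 := by omega
    exact (hconn.dist_eq_zero_iff.mp h2)
  obtain ⟨hEninj, hEnfst, hEnsur⟩ := hEn u
  -- the arcs from `u` to its children point away from `u` in its subtree
  have haway : ∀ k : Fin (m G o u), awayIn G o u (En u k) := by
    intro k
    obtain ⟨hf, hd⟩ := hEnfst k
    have hadj : G.Adj u (En u k).snd := by have h0 := (En u k).adj; rwa [hf] at h0
    have hd1 : G.dist u (En u k).snd = 1 := SimpleGraph.dist_eq_one_iff_adj.mpr hadj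
    refine ⟨?_, ?_, ?_⟩
    · unfold desc
      rw [hf, SimpleGraph.dist_self]
      omega
    · unfold desc
      rw [hd, hd1]
    · rw [hf, SimpleGraph.dist_self, hd1]
      omega
  -- pointwise evaluation of the vanishing linear combination
  have heval : ∀ e : G.Dart, ∑ p ∈ s, g p * (Φ p.1.1 p.1.2.1 p.1.2.2 e) = 0 := by
    intro e
    have h0 := congrFun hsum e
    simpa [Finset.sum_apply] using h0
  -- flows at other surviving vertices vanish on the arcs at `u`
  have hzero : ∀ p ∈ T, p.1.1 ≠ u → ∀ k : Fin (m G o u),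
      Φ p.1.1 p.1.2.1 p.1.2.2 (En u k) = 0 ∧
      Φ p.1.1 p.1.2.1 p.1.2.2 ((En u k).symm) = 0 := by
    intro p hp hne k
    obtain ⟨h1, h2, h3⟩ := p.2
    have hflow := hΦ p.1.1 p.1.2.1 p.1.2.2 h1 h2 h3
    obtain ⟨hf, hd⟩ := hEnfst k
    constructor
    · apply hflow.2.2.2
      rintro ⟨hd1, hd2⟩
      rw [hf] at hd1
      exact hne (descEq p hp hd1)
    · apply hflow.2.2.2
      rintro ⟨hd1, hd2⟩
      have hss : ((En u k).symm).snd = (En u k).fst := rfl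
      rw [hss, hf] at hd2
      exact hne (descEq p hp hd2)
  -- flows at `u` itself
  have hval : ∀ p ∈ s, p.1.1 = u → ∀ k : Fin (m G o u),
      Φ p.1.1 p.1.2.1 p.1.2.2 (En u k)
        = Complex.exp (2 * Real.pi * Complex.I * (p.1.2.1) / M) ^ (k : ℕ) / M ∧
      Φ p.1.1 p.1.2.1 p.1.2.2 ((En u k).symm)
        = -(p.1.2.2) * (Complex.exp (2 * Real.pi * Complex.I * (p.1.2.1) / M) ^ (k : ℕ) / M) := by
    intro p _ hpu k
    obtain ⟨h1, h2, h3⟩ := p.2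
    rw [hpu] at h2 ⊢
    have hflow := hΦ u p.1.2.1 p.1.2.2 h1 h2 h3
    refine ⟨hflow.1 k, ?_⟩
    rw [hflow.2.2.1 (En u k) (haway k), hflow.1 k]
  set su : Finset _ := s.filter (fun p => p.1.1 = u ∧ g p ≠ 0) with hsu
  set z : Fin (m G o u) → {p : V × ℕ × ℂ //
      1 ≤ p.2.1 ∧ p.2.1 ≤ m G o p.1 - 1 ∧ (p.2.2 = 1 ∨ p.2.2 = -1)} → ℂ :=
    fun k p => Complex.exp (2 * Real.pi * Complex.I * (p.1.2.1) / M) ^ (k : ℕ) / M with hz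
  have hsub : su ⊆ s := Finset.filter_subset _ _
  -- the two basic equations
  have Eq1 : ∀ k : Fin (m G o u), ∑ p ∈ su, g p * z k p = 0 := by
    intro k
    have e1 : ∑ p ∈ su, g p * (Φ p.1.1 p.1.2.1 p.1.2.2 (En u k))
        = ∑ p ∈ s, g p * (Φ p.1.1 p.1.2.1 p.1.2.2 (En u k)) := by
      apply Finset.sum_subset hsub
      intro p hps hpn
      rw [hsu, Finset.mem_filter] at hpn
      by_cases hg : g p = 0
      · rw [hg, zero_mul]
      · have hpu : p.1.1 ≠ u := by tauto
        rw [(hzero p (Finset.mem_filter.mpr ⟨hps, hg⟩) hpu k).1, mul_zero]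
    have e2 : ∑ p ∈ su, g p * z k p
        = ∑ p ∈ su, g p * (Φ p.1.1 p.1.2.1 p.1.2.2 (En u k)) := by
      apply Finset.sum_congr rfl
      intro p hp
      rw [hsu, Finset.mem_filter] at hp
      simp only [hz]
      rw [(hval p hp.1 hp.2.1 k).1]
    rw [e2, e1, heval]
  have Eq2 : ∀ k : Fin (m G o u), ∑ p ∈ su, g p * (-(p.1.2.2) * z k p) = 0 := by
    intro k
    have e1 : ∑ p ∈ su, g p * (Φ p.1.1 p.1.2.1 p.1.2.2 ((En u k).symm))
        = ∑ p ∈ s, g p * (Φ p.1.1 p.1.2.1 p.1.2.2 ((En u k).symm)) := by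
      apply Finset.sum_subset hsub
      intro p hps hpn
      rw [hsu, Finset.mem_filter] at hpn
      by_cases hg : g p = 0
      · rw [hg, zero_mul]
      · have hpu : p.1.1 ≠ u := by tauto
        rw [(hzero p (Finset.mem_filter.mpr ⟨hps, hg⟩) hpu k).2, mul_zero]
    have e2 : ∑ p ∈ su, g p * (-(p.1.2.2) * z k p)
        = ∑ p ∈ su, g p * (Φ p.1.1 p.1.2.1 p.1.2.2 ((En u k).symm)) := by
      apply Finset.sum_congr rfl
      intro p hp
      rw [hsu, Finset.mem_filter] at hp
      simp only [hz]
      rw [(hval p hp.1 hp.2.1 k).2]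
    rw [e2, e1, heval]
  -- extract the part with sign `σ₀`
  set σ₀ : ℂ := p₀.1.2.2 with hσ₀
  have hσ₀pm : σ₀ = 1 ∨ σ₀ = -1 := p₀.2.2.2
  have Eq3 : ∀ k : Fin (m G o u),
      ∑ p ∈ su.filter (fun p => p.1.2.2 = σ₀), g p * z k p = 0 := by
    intro k
    exact combine_aux su g (fun p => p.1.2.2) (z k) σ₀ hσ₀pm
      (fun p hp => p.2.2.2) (Eq1 k) (Eq2 k)
  -- apply Fourier orthogonality
  set sf := su.filter (fun p => p.1.2.2 = σ₀) with hsf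
  have hjm : ∀ p ∈ sf, p.1.2.1 < M := by
    intro p hp
    rw [hsf, Finset.mem_filter] at hp
    obtain ⟨hp1, _⟩ := hp
    rw [hsu, Finset.mem_filter] at hp1
    have h2 := p.2.2.1
    rw [hp1.2.1] at h2
    omega
  have hinj : ∀ p ∈ sf, ∀ p' ∈ sf, p.1.2.1 = p'.1.2.1 → p = p' := by
    intro p hp p' hp' hj
    rw [hsf, Finset.mem_filter] at hp hp'
    obtain ⟨hp1, hpe⟩ := hp
    obtain ⟨hp1', hpe'⟩ := hp'
    rw [hsu, Finset.mem_filter] at hp1 hp1'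
    apply Subtype.ext
    apply Prod.ext
    · rw [hp1.2.1, hp1'.2.1]
    · apply Prod.ext
      · exact hj
      · rw [hpe, hpe']
  have hfourier := fourier_aux sf M (by omega) (fun p => p.1.2.1) hjm hinj
    (fun p => g p / M)
    (by
      intro k hk
      have hE := Eq3 ⟨k, by rw [hM] at hk; exact hk⟩
      rw [← hE]
      apply Finset.sum_congr rfl
      intro p _
      simp only [hz]
      ring)
  have hp₀sf : p₀ ∈ sf := by
    rw [hsf, Finset.mem_filter, hsu, Finset.mem_filter]
    exact ⟨⟨hp₀s, rfl, hg₀⟩, rfl⟩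
  have hfin := hfourier p₀ hp₀sf
  rw [div_eq_zero_iff] at hfin
  exact hg₀ (hfin.resolve_right hMc)


end GroverStmt
end
end

section
/- Let L = d_T*(ℓ²(V)) + d_O*(ℓ²(V)). The orthogonal complement of L in ℓ²(A) is the orthogonal direct sum L^⊥ = (ker(d_O) ∩ H^(+)) ⊕ (ker(d_O) ∩ H^(−)); in particular the two subspaces ker(d_O) ∩ H^(+) and ker(d_O) ∩ H^(−) are mutually orthogonal and their sum is L^⊥. -/
/-! Reversing arcs, `(Sψ)(e) = ψ(ē)`, is an involutive isometry of `ℓ²(A)` with `d_T = d_O ∘ S`.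
Since `(ran d_T* + ran d_O*)^⊥ = ker d_T ∩ ker d_O`, a vector `ψ` lies in `L^⊥` iff both `ψ` and
`Sψ` lie in `ker d_O`, i.e. iff both halves of `ψ = ½(ψ + Sψ) + ½(ψ − Sψ)` do; these halves are
the `±1`-eigenvectors of `S`, and eigenvectors of an isometry for `1` and `−1` are orthogonal. -/

/- Setting: 𝕋 = (V,A) an infinite, locally finite tree. Vertices `V`, arcs = darts of a
simple graph `G`; `e.fst` = origin, `e.snd` = terminus, `e.symm` = reversed arc.
ℓ²(A) and ℓ²(V) are the `lp _ 2` spaces. The boundary operators, the shift and the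
Grover walk are characterized by their pointwise formulas. -/

noncomputable section
open scoped ComplexConjugate ComplexInnerProductSpace Classical
open Complex Filter Topology ContinuousLinearMap

namespace GroverStmt

variable {V : Type} (G : SimpleGraph V)

variable (o : V)

section lpReindex

variable {ι κ 𝕜 E : Type*} [NormedField 𝕜] [NormedAddCommGroup E] [NormedSpace 𝕜 E]
  {p : ENNReal}

theorem memℓp_comp_equiv (hp : 0 < p.toReal) (σ : ι ≃ κ) {f : κ → E} (hf : Memℓp f p) :
    Memℓp (f ∘ σ) p := by
  rw [memℓp_gen_iff hp] at hf ⊢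
  exact σ.summable_iff.2 hf

variable [Fact (1 ≤ p)]

def lpCompEquiv (hp : 0 < p.toReal) (σ : ι ≃ κ) :
    lp (fun _ : κ => E) p →ₗᵢ[𝕜] lp (fun _ : ι => E) p where
  toFun f := ⟨f ∘ σ, memℓp_comp_equiv hp σ (lp.memℓp f)⟩
  map_add' _ _ := rfl
  map_smul' _ _ := rfl
  norm_map' f := by
    rw [lp.norm_eq_tsum_rpow hp, lp.norm_eq_tsum_rpow hp]
    exact congrArg (· ^ (1 / p.toReal)) (σ.tsum_eq fun k => ‖f k‖ ^ p.toReal)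

@[simp]
theorem lpCompEquiv_apply (hp : 0 < p.toReal) (σ : ι ≃ κ) (f : lp (fun _ : κ => E) p) (i : ι) :
    lpCompEquiv (𝕜 := 𝕜) hp σ f i = f (σ i) :=
  rfl

end lpReindex

theorem inner_eq_zero_of_map_eq_self_of_map_eq_neg {𝕜 E : Type*} [RCLike 𝕜]
    [NormedAddCommGroup E] [InnerProductSpace 𝕜 E] (R : E →ₗᵢ[𝕜] E) {x y : E}
    (hx : R x = x) (hy : R y = -y) : inner 𝕜 x y = 0 := by
  have h := R.inner_map_map x y
  rw [hx, hy, inner_neg_right, neg_eq_iff_eq_neg] at h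
  exact self_eq_neg.1 h

theorem orthogonal_range_adjoint_sup {𝕜 E F : Type*} [RCLike 𝕜]
    [NormedAddCommGroup E] [InnerProductSpace 𝕜 E] [CompleteSpace E]
    [NormedAddCommGroup F] [InnerProductSpace 𝕜 F] [CompleteSpace F] (A B : E →L[𝕜] F) :
    (LinearMap.range (adjoint A).toLinearMap ⊔ LinearMap.range (adjoint B).toLinearMap)ᗮ =
      LinearMap.ker A.toLinearMap ⊓ LinearMap.ker B.toLinearMap := by
  rw [← Submodule.inf_orthogonal, orthogonal_range, orthogonal_range, adjoint_adjoint,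
    adjoint_adjoint]

theorem exists_ker_fixed_add_ker_antifixed_iff {K M N : Type*} [Field K] [NeZero (2 : K)]
    [AddCommGroup M] [Module K M] [AddCommGroup N] [Module K N] (R : M →ₗ[K] M)
    (hR : ∀ x, R (R x) = x) (D : M →ₗ[K] N) (x : M) :
    (∃ a b, D a = 0 ∧ R a = a ∧ D b = 0 ∧ R b = -b ∧ x = a + b) ↔ D x = 0 ∧ D (R x) = 0 := by
  constructor
  · rintro ⟨a, b, ha, hRa, hb, hRb, rfl⟩
    simp [ha, hb, hRa, hRb]
  · rintro ⟨hx, hRx⟩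
    refine ⟨(2⁻¹ : K) • (x + R x), (2⁻¹ : K) • (x - R x), ?_, ?_, ?_, ?_, ?_⟩
    · simp [hx, hRx]
    · simp [hR, add_comm]
    · simp [hx, hRx]
    · simp [hR, ← smul_neg]
    · rw [← smul_add, add_add_sub_cancel, ← two_smul K x, smul_smul, inv_mul_cancel₀ two_ne_zero,
        one_smul]

/-- The shift `S` of `IsShift`. -/
def dartReverse : lA G →ₗᵢ[ℂ] lA G :=
  lpCompEquiv (by norm_num) (Function.Involutive.toPerm _ SimpleGraph.Dart.symm_involutive)

@[simp]
theorem dartReverse_apply (ψ : lA G) (e : G.Dart) : dartReverse G ψ e = ψ e.symm :=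
  rfl

@[simp]
theorem dartReverse_dartReverse (ψ : lA G) : dartReverse G (dartReverse G ψ) = ψ :=
  lp.ext (funext fun e => by simp)

theorem dartReverse_eq_self_iff {ψ : lA G} : dartReverse G ψ = ψ ↔ ∀ e : G.Dart, ψ e.symm = ψ e :=
  ⟨fun h e => congrArg (· e) h, fun h => lp.ext (funext h)⟩

theorem dartReverse_eq_neg_iff {ψ : lA G} :
    dartReverse G ψ = -ψ ↔ ∀ e : G.Dart, ψ e.symm = -ψ e :=
  ⟨fun h e => congrArg (· e) h, fun h => lp.ext (funext h)⟩

theorem boundaryT_eq_boundaryO_dartReverse [∀ v : V, Fintype (G.neighborSet v)]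
    {dT dO : lA G →L[ℂ] lV V} (hdT : IsBoundaryT G dT) (hdO : IsBoundaryO G dO) (ψ : lA G) :
    dT ψ = dO (dartReverse G ψ) := by
  refine lp.ext (funext fun u => ?_)
  rw [hdT, hdO]
  let reverse : {e : G.Dart // e.fst = u} ≃ {e : G.Dart // e.snd = u} :=
    (Function.Involutive.toPerm _ SimpleGraph.Dart.symm_involutive).subtypeEquiv fun _ => Iff.rfl
  exact (reverse.tsum_eq fun e => ψ e.1 / (Real.sqrt (G.degree u) : ℂ)).symm

/-- with `L = d_T*(ℓ²(V)) + d_O*(ℓ²(V))`, the subspaces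
`ker(d_O) ∩ H^(+)` and `ker(d_O) ∩ H^(−)` are mutually orthogonal and
`L^⊥` is exactly their (orthogonal direct) sum. -/
theorem statement5 {V : Type} (G : SimpleGraph V) [∀ v : V, Fintype (G.neighborSet v)]
    (hG : G.IsTree) [Infinite V]
    (dT dO : lA G →L[ℂ] lV V)
    (hdT : IsBoundaryT G dT) (hdO : IsBoundaryO G dO) :
    (∀ ψ χ : lA G, dO ψ = 0 → (∀ e : G.Dart, ψ e.symm = ψ e) →
        dO χ = 0 → (∀ e : G.Dart, χ e.symm = -χ e) → ⟪ψ, χ⟫ = 0) ∧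
    (∀ ψ : lA G,
      ψ ∈ (LinearMap.range (adjoint dT).toLinearMap ⊔ LinearMap.range (adjoint dO).toLinearMap)ᗮ ↔
      ∃ ψp ψm : lA G, dO ψp = 0 ∧ (∀ e : G.Dart, ψp e.symm = ψp e) ∧
        dO ψm = 0 ∧ (∀ e : G.Dart, ψm e.symm = -ψm e) ∧ ψ = ψp + ψm) := by
  refine ⟨fun ψ χ _ hψ _ hχ => inner_eq_zero_of_map_eq_self_of_map_eq_neg (dartReverse G)
      ((dartReverse_eq_self_iff G).2 hψ) ((dartReverse_eq_neg_iff G).2 hχ), fun ψ => ?_⟩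
  have h := exists_ker_fixed_add_ker_antifixed_iff (dartReverse G).toLinearMap
    (dartReverse_dartReverse G) dO.toLinearMap ψ
  simp only [LinearIsometry.coe_toLinearMap, coe_coe, dartReverse_eq_self_iff,
    dartReverse_eq_neg_iff] at h
  rw [orthogonal_range_adjoint_sup, Submodule.mem_inf, LinearMap.mem_ker, LinearMap.mem_ker,
    coe_coe, coe_coe, boundaryT_eq_boundaryO_dartReverse G hdT hdO, and_comm, h]

end GroverStmt
end
end

section
/- Assume every vertex of 𝕋 has degree at least 3. Then 1 and −1 are eigenvalues of the Grover walk U; moreover ker(U − 1) contains ker(d_O) ∩ H^(−), ker(U + 1) contains ker(d_O) ∩ H^(+), and both ker(U − 1) and ker(U + 1) are infinite-dimensional subspaces of ℓ²(A). -/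
/-!
Root the tree at a vertex `o`; every vertex then has at least two children. Send a unit into one
child `x` of a vertex `u` and out of a sibling `y`, and push it away from the root by splitting
whatever enters a vertex equally among its children, with a factor `-ε` at each step and `ε` on
the reversed arcs. The result `ψ` satisfies `d_O ψ = 0` and `ψ(ē) = ε ψ(e)`, and it is square
summable because the squared mass at least halves from one generation to the next. For such `ψ`
one has `d_T ψ = ε d_O ψ = 0`, hence `U ψ = -S ψ = -ε ψ`. Letting `u` run through vertices at depths
`0, 1, 2, …` gives a triangular, hence linearly independent, sequence in each eigenspace.
-/

/- Setting: 𝕋 = (V,A) an infinite, locally finite tree. Vertices `V`, arcs = darts of a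
simple graph `G`; `e.fst` = origin, `e.snd` = terminus, `e.symm` = reversed arc.
ℓ²(A) and ℓ²(V) are the `lp _ 2` spaces. The boundary operators, the shift and the
Grover walk are characterized by their pointwise formulas. -/

noncomputable section
open scoped ComplexConjugate ComplexInnerProductSpace Classical
open Complex Filter Topology ContinuousLinearMap

namespace GroverStmt

variable {V : Type} (G : SimpleGraph V)

variable (o : V)

open SimpleGraph

theorem linearIndependent_of_triangular {R M : Type*} [Ring R] [AddCommGroup M] [Module R M]
    (v : ℕ → M) (f : ℕ → M →ₗ[R] R) (h0 : ∀ i j, i < j → f i (v j) = 0)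
    (h1 : ∀ i, f i (v i) = 1) : LinearIndependent R v := by
  refine linearIndependent_iff'.2 fun s g hrel i => ?_
  induction i using Nat.strong_induction_on with
  | _ i ih =>
    intro hi
    have h := congrArg (f i) hrel
    rw [map_sum, map_zero, Finset.sum_eq_single i] at h
    · simpa [h1] using h
    · intro j hj hji
      rcases lt_or_gt_of_ne hji with hlt | hlt
      · simp [ih j hlt hj]
      · simp [h0 i j hlt]
    · exact fun hi' => absurd hi hi'

lemma exists_mem_ne_zero_of_not_finiteDimensional {𝕜 M : Type*} [DivisionRing 𝕜]
    [AddCommGroup M] [Module 𝕜 M] {K : Submodule 𝕜 M} (h : ¬FiniteDimensional 𝕜 K) :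
    ∃ x ∈ K, x ≠ 0 :=
  Submodule.exists_mem_ne_zero_of_ne_bot fun hK => h (hK ▸ inferInstance)

section RootedTree

variable {G} {o}

lemma exists_adj_dist_add_one (hG : G.Connected) {v : V} (hv : v ≠ o) :
    ∃ w, G.Adj v w ∧ G.dist o w + 1 = G.dist o v := by
  obtain ⟨p, hp⟩ := hG.exists_walk_length_eq_dist v o
  rcases p with _ | ⟨h, q⟩
  · exact absurd rfl hv
  · obtain ⟨q', hq'⟩ := hG.exists_walk_length_eq_dist _ o
    have hle := dist_le (Walk.cons h q')
    have hge := dist_le q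
    simp only [Walk.length_cons] at hp hle
    refine ⟨_, h, ?_⟩
    rw [SimpleGraph.dist_comm, SimpleGraph.dist_comm (u := o)]
    omega

def parent (hG : G.IsTree) (o v : V) : V :=
  if h : v = o then o else (exists_adj_dist_add_one hG.connected h).choose

variable (hG : G.IsTree)

lemma parent_adj {v : V} (hv : v ≠ o) : G.Adj v (parent hG o v) := by
  rw [parent, dif_neg hv]
  exact (exists_adj_dist_add_one hG.connected hv).choose_spec.1

lemma dist_parent_add_one {v : V} (hv : v ≠ o) : G.dist o (parent hG o v) + 1 = G.dist o v := by
  rw [parent, dif_neg hv]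
  exact (exists_adj_dist_add_one hG.connected hv).choose_spec.2

/-- A geodesic from the root to `v` ends with the edge from `w`; geodesics in a tree are unique. -/
lemma eq_parent {v w : V} (h : G.Adj v w) (hd : G.dist o w + 1 = G.dist o v) :
    w = parent hG o v := by
  have hv : v ≠ o := by
    rintro rfl
    simp at hd
  obtain ⟨q, hq⟩ := hG.connected.exists_walk_length_eq_dist o w
  obtain ⟨q', hq'⟩ := hG.connected.exists_walk_length_eq_dist o (parent hG o v)
  have hp : (q.concat h.symm).IsPath := (q.concat h.symm).isPath_of_length_eq_dist (by
    rw [Walk.length_concat, hq, hd])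
  have hp' : (q'.concat (parent_adj hG hv).symm).IsPath :=
    (q'.concat _).isPath_of_length_eq_dist (by
      rw [Walk.length_concat, hq', dist_parent_add_one hG hv])
  have := congrArg Walk.penultimate ((hG.existsUnique_path o v).unique hp hp')
  rwa [Walk.penultimate_concat, Walk.penultimate_concat] at this

lemma fst_eq_parent {e : G.Dart} (he : G.dist o e.snd = G.dist o e.fst + 1) :
    e.fst = parent hG o e.snd :=
  eq_parent hG e.adj.symm he.symm

lemma snd_eq_parent {e : G.Dart} (he : ¬G.dist o e.snd = G.dist o e.fst + 1) :
    e.snd = parent hG o e.fst :=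
  eq_parent hG e.adj ((hG.dist_eq_dist_add_one_of_adj o e.adj).resolve_right he).symm

lemma dart_eq_of_snd_eq (hG : G.IsTree) {e e' : G.Dart} (he : G.dist o e.snd = G.dist o e.fst + 1)
    (he' : G.dist o e'.snd = G.dist o e'.fst + 1) (h : e.snd = e'.snd) : e = e' :=
  Dart.ext _ _ (Prod.ext (by rw [fst_eq_parent hG he, fst_eq_parent hG he', h]) h)

lemma dart_eq_of_fst_eq (hG : G.IsTree) {e e' : G.Dart} (he : ¬G.dist o e.snd = G.dist o e.fst + 1)
    (he' : ¬G.dist o e'.snd = G.dist o e'.fst + 1) (h : e.fst = e'.fst) : e = e' :=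
  Dart.ext _ _ (Prod.ext h (by rw [snd_eq_parent hG he, snd_eq_parent hG he', h]))

end RootedTree

section Children

variable {G} {o} [∀ v : V, Fintype (G.neighborSet v)] (hG : G.IsTree)

def children (hG : G.IsTree) (o w : V) : Finset V :=
  (G.neighborFinset w).filter fun x => x ≠ o ∧ parent hG o x = w

lemma mem_children {w x : V} : x ∈ children hG o w ↔ x ≠ o ∧ parent hG o x = w := by
  rw [children, Finset.mem_filter, mem_neighborFinset, and_iff_right_iff_imp]
  rintro ⟨hx, rfl⟩
  exact (parent_adj hG hx).symm

lemma adj_of_mem_children {w x : V} (hx : x ∈ children hG o w) : G.Adj w x :=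
  (mem_neighborFinset _ _ _).1 (Finset.filter_subset _ _ hx)

lemma dist_of_mem_children {w x : V} (hx : x ∈ children hG o w) :
    G.dist o x = G.dist o w + 1 := by
  obtain ⟨hxo, rfl⟩ := (mem_children hG).1 hx
  exact (dist_parent_add_one hG hxo).symm

lemma mem_children_of_adj {w x : V} (h : G.Adj w x) (hd : G.dist o x = G.dist o w + 1) :
    x ∈ children hG o w := by
  refine (mem_children hG).2 ⟨?_, (eq_parent hG h.symm hd.symm).symm⟩
  rintro rfl
  simp at hd

lemma parent_notMem_children {w : V} (hw : w ≠ o) : parent hG o w ∉ children hG o w := by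
  intro h
  obtain ⟨hp, hpp⟩ := (mem_children hG).1 h
  have h1 := dist_parent_add_one hG hw
  have h2 := dist_parent_add_one hG hp
  rw [hpp] at h2
  omega

lemma sum_neighborFinset {M : Type*} [AddCommMonoid M] (g : V → M) (w : V) :
    ∑ x ∈ G.neighborFinset w, g x =
      ∑ x ∈ children hG o w, g x + if w = o then 0 else g (parent hG o w) := by
  by_cases hw : w = o
  · subst hw
    rw [if_pos rfl, add_zero]
    refine Finset.sum_congr (Finset.ext fun x => ⟨fun hx => ?_, fun hx => ?_⟩) fun _ _ => rfl
    · have h := (mem_neighborFinset _ _ _).1 hx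
      refine mem_children_of_adj hG h ?_
      have := hG.dist_eq_dist_add_one_of_adj w h
      simp only [SimpleGraph.dist_self] at this ⊢
      omega
    · exact Finset.filter_subset _ _ hx
  · have hN : G.neighborFinset w = insert (parent hG o w) (children hG o w) := by
      ext x
      rw [Finset.mem_insert]
      refine ⟨fun hx => ?_, ?_⟩
      · have h := (mem_neighborFinset _ _ _).1 hx
        rcases hG.dist_eq_dist_add_one_of_adj o h with hd | hd
        · exact .inl (eq_parent hG h hd.symm)
        · exact .inr (mem_children_of_adj hG h hd)
      · rintro (rfl | hx)
        · exact (mem_neighborFinset _ _ _).2 (parent_adj hG hw)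
        · exact Finset.filter_subset _ _ hx
    rw [hN, Finset.sum_insert (parent_notMem_children hG hw), if_neg hw, add_comm]

lemma two_le_card_children (hdeg : ∀ v : V, 3 ≤ G.degree v) (w : V) :
    2 ≤ (children hG o w).card := by
  have h := sum_neighborFinset hG (o := o) (fun _ => 1) w
  simp only [Finset.sum_const, smul_eq_mul, mul_one, card_neighborFinset_eq_degree]
    at h
  have := hdeg w
  split_ifs at h <;> omega

end Children

section Inflow

variable {G} {o} [∀ v : V, Fintype (G.neighborSet v)]

/-- The value on the edge from the parent of `v` down to `v`. -/
def inflow (hG : G.IsTree) (o : V) (σ : ℂ) (c : V → ℂ) (v : V) : ℂ :=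
  if h : v = o then 0
  else
    have := dist_parent_add_one hG h
    c v + σ * inflow hG o σ c (parent hG o v) / (children hG o (parent hG o v)).card
termination_by G.dist o v

variable (hG : G.IsTree) (σ : ℂ) (c : V → ℂ)

lemma inflow_root : inflow hG o σ c o = 0 := by
  rw [inflow, dif_pos rfl]

lemma inflow_of_ne {v : V} (hv : v ≠ o) :
    inflow hG o σ c v =
      c v + σ * inflow hG o σ c (parent hG o v) / (children hG o (parent hG o v)).card := by
  rw [inflow, dif_neg hv]

variable {L : ℕ} (hc : ∀ v, c v ≠ 0 → G.dist o v = L + 1)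
include hc

lemma inflow_eq_zero_of_dist_le {v : V} (hv : G.dist o v ≤ L) : inflow hG o σ c v = 0 := by
  suffices ∀ n v, G.dist o v = n → n ≤ L → inflow hG o σ c v = 0 from this _ v rfl hv
  intro n
  induction n with
  | zero =>
    intro v hv _
    rw [(hG.connected.dist_eq_zero_iff.1 hv).symm, inflow_root]
  | succ n ih =>
    intro v hv hn
    have hv' : v ≠ o := by rintro rfl; simp at hv
    have hcv : c v = 0 := by_contra fun h => by have := hc v h; omega
    have := dist_parent_add_one hG hv'
    rw [inflow_of_ne hG σ c hv', hcv, ih _ (by omega) (by omega)]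
    simp

lemma inflow_eq_of_dist_le {v : V} (hv : G.dist o v ≤ L + 1) : inflow hG o σ c v = c v := by
  by_cases hvo : v = o
  · subst hvo
    rw [inflow_root]
    exact (by_contra fun h => by simpa using hc v (Ne.symm h))
  · have := dist_parent_add_one hG hvo
    rw [inflow_of_ne hG σ c hvo, inflow_eq_zero_of_dist_le hG σ c hc (by omega)]
    simp

end Inflow

section SquareSum

variable {G} {o} [∀ v : V, Fintype (G.neighborSet v)] (hG : G.IsTree) {σ : ℂ} (hσ : ‖σ‖ = 1)
  (hc2 : ∀ w, 2 ≤ (children hG o w).card) {c : V → ℂ}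
include hσ hc2

/-- Each vertex receives at most half of the squared mass of its parent, because its parent has
at least two children that share the inflow equally. -/
lemma sum_sq_inflow_le_half {t : Finset V} (ht : ∀ v ∈ t, v ≠ o ∧ c v = 0) :
    ∑ v ∈ t, ‖inflow hG o σ c v‖ ^ 2 ≤
      (∑ w ∈ t.image (parent hG o), ‖inflow hG o σ c w‖ ^ 2) / 2 := by
  set g : V → ℝ := fun w => ‖inflow hG o σ c w‖ ^ 2 / ((children hG o w).card : ℝ) ^ 2
  have hstep : ∀ v ∈ t, ‖inflow hG o σ c v‖ ^ 2 = g (parent hG o v) := by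
    intro v hv
    rw [inflow_of_ne hG σ c (ht v hv).1, (ht v hv).2, zero_add, norm_div, norm_mul, hσ, one_mul,
      Complex.norm_natCast, div_pow]
  rw [Finset.sum_congr rfl hstep, Finset.sum_comp, Finset.sum_div]
  refine Finset.sum_le_sum fun w _ => ?_
  have hfib : (t.filter fun v => parent hG o v = w).card ≤ (children hG o w).card :=
    Finset.card_le_card fun v hv => by
      rw [Finset.mem_filter] at hv
      exact (mem_children hG).2 ⟨(ht v hv.1).1, hv.2⟩
  have hn : (2 : ℝ) ≤ (children hG o w).card := by exact_mod_cast hc2 w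
  have ha : 0 ≤ ‖inflow hG o σ c w‖ ^ 2 := by positivity
  calc (t.filter fun v => parent hG o v = w).card • g w
      ≤ ((children hG o w).card : ℝ) * g w := by
        rw [nsmul_eq_mul]; gcongr
    _ = ‖inflow hG o σ c w‖ ^ 2 / (children hG o w).card := by
        simp only [g]; field_simp
    _ ≤ ‖inflow hG o σ c w‖ ^ 2 / 2 := div_le_div_of_nonneg_left ha (by norm_num) hn

variable {L : ℕ} (hc : ∀ v, c v ≠ 0 → G.dist o v = L + 1) {B : ℝ}
  (hB : ∀ t : Finset V, ∑ v ∈ t, ‖c v‖ ^ 2 ≤ B)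
include hc hB

lemma sum_sq_inflow_level_le (n : ℕ) {t : Finset V} (ht : ∀ v ∈ t, G.dist o v = n) :
    ∑ v ∈ t, ‖inflow hG o σ c v‖ ^ 2 ≤ B * 2 ^ (L + 1) * (1 / 2) ^ n := by
  have hB0 : 0 ≤ B := by simpa using hB ∅
  have hsmall : ∀ n ≤ L + 1, ∀ t : Finset V, (∀ v ∈ t, G.dist o v = n) →
      ∑ v ∈ t, ‖inflow hG o σ c v‖ ^ 2 ≤ B * 2 ^ (L + 1) * (1 / 2) ^ n := by
    intro n hn t ht
    calc ∑ v ∈ t, ‖inflow hG o σ c v‖ ^ 2 = ∑ v ∈ t, ‖c v‖ ^ 2 :=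
          Finset.sum_congr rfl fun v hv => by
            rw [inflow_eq_of_dist_le hG σ c hc ((ht v hv).trans_le hn)]
      _ ≤ B * 2 ^ (L + 1) * (1 / 2) ^ (L + 1) := by
          rw [mul_assoc, ← mul_pow]; norm_num [hB t]
      _ ≤ B * 2 ^ (L + 1) * (1 / 2) ^ n :=
          mul_le_mul_of_nonneg_left (pow_le_pow_of_le_one (by norm_num) (by norm_num) hn)
            (by positivity)
  induction n generalizing t with
  | zero => exact hsmall 0 (Nat.zero_le _) t ht
  | succ n ih =>
    by_cases hn : n + 1 ≤ L + 1
    · exact hsmall _ hn t ht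
    have hsrc : ∀ v ∈ t, v ≠ o ∧ c v = 0 := fun v hv =>
      ⟨by rintro rfl; simpa using ht _ hv,
        by_contra fun h => by have := hc v h; have := ht v hv; omega⟩
    have himage : ∀ w ∈ t.image (parent hG o), G.dist o w = n := by
      simp only [Finset.mem_image]
      rintro _ ⟨v, hv, rfl⟩
      have := dist_parent_add_one hG (hsrc v hv).1
      have := ht v hv
      omega
    calc ∑ v ∈ t, ‖inflow hG o σ c v‖ ^ 2
        ≤ (∑ w ∈ t.image (parent hG o), ‖inflow hG o σ c w‖ ^ 2) / 2 :=
          sum_sq_inflow_le_half hG hσ hc2 hsrc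
      _ ≤ B * 2 ^ (L + 1) * (1 / 2) ^ n / 2 := by gcongr; exact ih himage
      _ = B * 2 ^ (L + 1) * (1 / 2) ^ (n + 1) := by ring

lemma sum_sq_inflow_le (t : Finset V) :
    ∑ v ∈ t, ‖inflow hG o σ c v‖ ^ 2 ≤ B * 2 ^ (L + 2) := by
  have hB0 : 0 ≤ B := by simpa using hB ∅
  have hgeom : ∑ n ∈ t.image (G.dist o), (1 / 2 : ℝ) ^ n ≤ 2 :=
    (summable_geometric_two.sum_le_tsum _ fun _ _ => by positivity).trans
      tsum_geometric_two.le
  rw [← Finset.sum_fiberwise_of_maps_to fun v hv => Finset.mem_image_of_mem (G.dist o) hv]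
  calc ∑ n ∈ t.image (G.dist o), ∑ v ∈ t with G.dist o v = n, ‖inflow hG o σ c v‖ ^ 2
      ≤ ∑ n ∈ t.image (G.dist o), B * 2 ^ (L + 1) * (1 / 2) ^ n :=
        Finset.sum_le_sum fun n _ => sum_sq_inflow_level_le hG hσ hc2 hc hB n
          fun v hv => (Finset.mem_filter.1 hv).2
    _ ≤ B * 2 ^ (L + 1) * 2 := by rw [← Finset.mul_sum]; gcongr
    _ = B * 2 ^ (L + 2) := by ring

end SquareSum

section EdgeFlow

variable {G} {o} [∀ v : V, Fintype (G.neighborSet v)] (hG : G.IsTree) {ε : ℂ} (c : V → ℂ)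

/-- The ratio `-ε` makes the children of a vertex jointly pass on `-ε` times what it receives,
cancelling the `ε` times that amount on the edge back to its parent. -/
def edgeFlow (hG : G.IsTree) (o : V) (ε : ℂ) (c : V → ℂ) (v w : V) : ℂ :=
  if G.dist o w = G.dist o v + 1 then inflow hG o (-ε) c w else ε * inflow hG o (-ε) c v

lemma edgeFlow_swap (hε : ε ^ 2 = 1) {v w : V} (h : G.Adj v w) :
    edgeFlow hG o ε c w v = ε * edgeFlow hG o ε c v w := by
  rcases hG.dist_eq_dist_add_one_of_adj o h with hd | hd
  · rw [edgeFlow, if_pos hd, edgeFlow, if_neg (by omega), ← mul_assoc, ← sq, hε, one_mul]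
  · rw [edgeFlow, if_neg (by omega), edgeFlow, if_pos hd]

lemma edgeFlow_of_mem_children {w x : V} (hx : x ∈ children hG o w) :
    edgeFlow hG o ε c w x = inflow hG o (-ε) c x :=
  if_pos (dist_of_mem_children hG hx)

lemma sum_edgeFlow_neighborFinset (hc2 : ∀ w, 2 ≤ (children hG o w).card) (w : V) :
    ∑ x ∈ G.neighborFinset w, edgeFlow hG o ε c w x = ∑ x ∈ children hG o w, c x := by
  have hchild : ∀ x ∈ children hG o w, edgeFlow hG o ε c w x =
      c x + -ε * inflow hG o (-ε) c w / (children hG o w).card := by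
    intro x hx
    obtain ⟨hxo, hxw⟩ := (mem_children hG).1 hx
    rw [edgeFlow_of_mem_children hG c hx, inflow_of_ne hG _ c hxo, hxw]
  have hcard : ((children hG o w).card : ℂ) ≠ 0 := by
    have := hc2 w
    exact_mod_cast (by omega : (children hG o w).card ≠ 0)
  rw [sum_neighborFinset hG, Finset.sum_congr rfl hchild, Finset.sum_add_distrib,
    Finset.sum_const, nsmul_eq_mul]
  split_ifs with hw
  · subst hw
    simp [inflow_root]
  · rw [edgeFlow, if_neg (by have := dist_parent_add_one hG hw; omega)]
    field_simp
    ring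

/-- Every vertex is the far end of at most two darts, so the squared `ℓ²` mass on darts is at most
twice the mass of `inflow` on vertices. -/
lemma sum_sq_edgeFlow_le (hε : ε ^ 2 = 1) {C : ℝ}
    (hC : ∀ t : Finset V, ∑ v ∈ t, ‖inflow hG o (-ε) c v‖ ^ 2 ≤ C) (s : Finset G.Dart) :
    ∑ e ∈ s, ‖edgeFlow hG o ε c e.fst e.snd‖ ^ 2 ≤ 2 * C := by
  have hε1 : ‖ε‖ = 1 := norm_eq_one_of_pow_eq_one hε two_ne_zero
  set f := inflow hG o (-ε) c
  set down : G.Dart → Prop := fun e => G.dist o e.snd = G.dist o e.fst + 1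
  have hdown : ∑ e ∈ s with down e, ‖edgeFlow hG o ε c e.fst e.snd‖ ^ 2 ≤ C := by
    rw [Finset.sum_congr rfl fun e he => by rw [edgeFlow, if_pos (Finset.mem_filter.1 he).2],
      ← Finset.sum_image (g := fun e : G.Dart => e.snd) (f := fun v => ‖f v‖ ^ 2)]
    · exact hC _
    · exact fun e he e' he' =>
        dart_eq_of_snd_eq hG (Finset.mem_filter.1 he).2 (Finset.mem_filter.1 he').2
  have hup : ∑ e ∈ s with ¬down e, ‖edgeFlow hG o ε c e.fst e.snd‖ ^ 2 ≤ C := by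
    rw [Finset.sum_congr rfl fun e he => by
        rw [edgeFlow, if_neg (Finset.mem_filter.1 he).2, norm_mul, hε1, one_mul],
      ← Finset.sum_image (g := fun e : G.Dart => e.fst) (f := fun v => ‖f v‖ ^ 2)]
    · exact hC _
    · exact fun e he e' he' =>
        dart_eq_of_fst_eq hG (Finset.mem_filter.1 he).2 (Finset.mem_filter.1 he').2
  rw [← Finset.sum_filter_add_sum_filter_not s down]
  linarith

lemma memℓp_edgeFlow (hε : ε ^ 2 = 1) {C : ℝ}
    (hC : ∀ t : Finset V, ∑ v ∈ t, ‖inflow hG o (-ε) c v‖ ^ 2 ≤ C) :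
    Memℓp (fun e : G.Dart => edgeFlow hG o ε c e.fst e.snd) 2 :=
  memℓp_gen' fun s => by simpa using sum_sq_edgeFlow_le hG c hε hC s

end EdgeFlow

section Operators

variable {G}

lemma shift_eq_smul {S : lA G →L[ℂ] lA G} (hS : IsShift G S) {ψ : lA G} {ε : ℂ}
    (hsym : ∀ e : G.Dart, ψ e.symm = ε * ψ e) : S ψ = ε • ψ := by
  ext e
  rw [hS, hsym, lp.coeFn_smul, Pi.smul_apply, smul_eq_mul]

variable [∀ v : V, Fintype (G.neighborSet v)]

lemma tsum_dartsFrom (g : V → V → ℂ) (w : V) :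
    ∑' e : {e : G.Dart // e.fst = w}, g e.1.fst e.1.snd = ∑ x ∈ G.neighborFinset w, g w x := by
  let eqv : {e : G.Dart // e.fst = w} ≃ G.neighborSet w :=
    { toFun := fun e => ⟨e.1.snd, by simpa [e.2] using e.1.adj⟩
      invFun := fun x => ⟨G.dartOfNeighborSet w x, rfl⟩
      left_inv := by rintro ⟨e, rfl⟩; rfl
      right_inv := fun _ => rfl }
  rw [← eqv.symm.tsum_eq, tsum_fintype,
    Finset.sum_subtype _ fun x => mem_neighborFinset G w x]
  rfl

lemma dO_eq_zero {dO : lA G →L[ℂ] lV V} (hdO : IsBoundaryO G dO) {ψ : lA G}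
    (h : ∀ w, ∑' e : {e : G.Dart // e.fst = w}, ψ e.1 = 0) : dO ψ = 0 := by
  ext w
  rw [hdO, tsum_div_const, h, zero_div]
  rfl

lemma dT_eq_smul_dO {dT dO : lA G →L[ℂ] lV V} (hdT : IsBoundaryT G dT) (hdO : IsBoundaryO G dO)
    {ψ : lA G} {ε : ℂ} (hsym : ∀ e : G.Dart, ψ e.symm = ε * ψ e) : dT ψ = ε • dO ψ := by
  ext u
  let eqv : {e : G.Dart // e.fst = u} ≃ {e : G.Dart // e.snd = u} :=
    Equiv.subtypeEquiv (Function.Involutive.toPerm _ Dart.symm_involutive)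
      fun _ => Iff.rfl
  rw [hdT, lp.coeFn_smul, Pi.smul_apply, hdO, smul_eq_mul, ← tsum_mul_left, ← eqv.tsum_eq]
  refine tsum_congr fun e => ?_
  show ψ e.1.symm / _ = ε * (ψ e.1 / _)
  rw [hsym, mul_div_assoc]

lemma grover_apply_of_symm {dT dO : lA G →L[ℂ] lV V} {S : lA G →L[ℂ] lA G}
    (hdT : IsBoundaryT G dT) (hdO : IsBoundaryO G dO) (hS : IsShift G S) {ψ : lA G} {ε : ℂ}
    (hO : dO ψ = 0) (hsym : ∀ e : G.Dart, ψ e.symm = ε * ψ e) :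
    grover G S dT ψ = -ε • ψ := by
  have hT : dT ψ = 0 := by rw [dT_eq_smul_dO hdT hdO hsym, hO, smul_zero]
  simp [grover, hT, shift_eq_smul hS hsym]

end Operators

section Dipole

variable {G} {o} [∀ v : V, Fintype (G.neighborSet v)] (hG : G.IsTree)

def dipole (x y : V) : V → ℂ := Pi.single x 1 - Pi.single y 1

lemma eq_or_eq_of_dipole_ne_zero {x y v : V} (h : dipole x y v ≠ 0) : v = x ∨ v = y := by
  by_contra! hv
  simp [dipole, hv.1, hv.2] at h

lemma sum_sq_dipole_le {x y : V} (hxy : x ≠ y) (t : Finset V) :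
    ∑ v ∈ t, ‖dipole x y v‖ ^ 2 ≤ 2 := by
  have hpt : ∀ v, ‖dipole x y v‖ ^ 2 ≤ (Pi.single x 1 : V → ℝ) v + (Pi.single y 1 : V → ℝ) v := by
    intro v
    by_cases hx : v = x <;> by_cases hy : v = y <;> simp_all [dipole]
  calc ∑ v ∈ t, ‖dipole x y v‖ ^ 2
        ≤ ∑ v ∈ t, ((Pi.single x 1 : V → ℝ) v + (Pi.single y 1 : V → ℝ) v) :=
          Finset.sum_le_sum fun v _ => hpt v
    _ ≤ 2 := by
        rw [Finset.sum_add_distrib, Finset.sum_pi_single', Finset.sum_pi_single']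
        split_ifs <;> norm_num

lemma sum_dipole_children {u x y : V} (hx : x ∈ children hG o u) (hy : y ∈ children hG o u)
    (w : V) : ∑ v ∈ children hG o w, dipole x y v = 0 := by
  have hmem : ∀ {z}, z ∈ children hG o u → (z ∈ children hG o w ↔ u = w) := fun hz => by
    obtain ⟨hzo, rfl⟩ := (mem_children hG).1 hz
    simp [mem_children hG, hzo]
  simp only [dipole, Pi.sub_apply, Finset.sum_sub_distrib, Finset.sum_pi_single', hmem hx,
    hmem hy, sub_self]

end Dipole

section Eigenvectors

variable {G} {o} [∀ v : V, Fintype (G.neighborSet v)] (hG : G.IsTree)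
  (hc2 : ∀ w, 2 ≤ (children hG o w).card)
include hc2

lemma exists_two_children_at_dist (n : ℕ) :
    ∃ u x y, G.dist o u = n ∧ x ∈ children hG o u ∧ y ∈ children hG o u ∧ x ≠ y := by
  have hu : ∃ u, G.dist o u = n := by
    induction n with
    | zero => exact ⟨o, SimpleGraph.dist_self⟩
    | succ n ih =>
      obtain ⟨u, rfl⟩ := ih
      obtain ⟨x, hx⟩ := (children hG o u).card_pos.1 (by have := hc2 u; omega)
      exact ⟨x, dist_of_mem_children hG hx⟩
  obtain ⟨u, hu⟩ := hu
  obtain ⟨x, hx, y, hy, hxy⟩ :=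
    (Finset.one_lt_card (s := children hG o u)).1 (by have := hc2 u; omega)
  exact ⟨u, x, y, hu, hx, hy, hxy⟩

/-- The `n`-th flow starts at two children of a vertex at depth `n`; it is `1` on the edge into the
first child and vanishes on the outward edges above depth `n + 1`, so the family is triangular. -/
lemma exists_linearIndependent_symm_flows {dO : lA G →L[ℂ] lV V} (hdO : IsBoundaryO G dO)
    {ε : ℂ} (hε : ε ^ 2 = 1) :
    ∃ ψ : ℕ → lA G, LinearIndependent ℂ ψ ∧
      ∀ n, dO (ψ n) = 0 ∧ ∀ e : G.Dart, ψ n e.symm = ε * ψ n e := by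
  choose u x y hu hx hy hxy using exists_two_children_at_dist hG hc2
  have hsupp : ∀ n v, dipole (x n) (y n) v ≠ 0 → G.dist o v = n + 1 := fun n v hv => by
    rcases eq_or_eq_of_dipole_ne_zero hv with rfl | rfl
    · rw [dist_of_mem_children hG (hx n), hu]
    · rw [dist_of_mem_children hG (hy n), hu]
  have hσ : ‖-ε‖ = 1 := by rw [norm_neg, norm_eq_one_of_pow_eq_one hε two_ne_zero]
  let ψ : ℕ → lA G := fun n => ⟨fun e => edgeFlow hG o ε (dipole (x n) (y n)) e.fst e.snd,
    memℓp_edgeFlow hG _ hε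
      (sum_sq_inflow_le hG hσ hc2 (hsupp n) (sum_sq_dipole_le (hxy n)))⟩
  let a : ℕ → G.Dart := fun n => ⟨(u n, x n), adj_of_mem_children hG (hx n)⟩
  have hψa : ∀ m n, ψ m (a n) = inflow hG o (-ε) (dipole (x m) (y m)) (x n) := fun m n =>
    edgeFlow_of_mem_children hG _ (hx n)
  refine ⟨ψ, linearIndependent_of_triangular ψ (fun n => lp.evalₗ _ 2 (a n)) ?_ ?_,
    fun n => ⟨?_, ?_⟩⟩
  · intro m n hmn
    show ψ n (a m) = 0
    rw [hψa, inflow_eq_zero_of_dist_le hG _ _ (hsupp n)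
      (by rw [dist_of_mem_children hG (hx m), hu]; omega)]
  · intro n
    show ψ n (a n) = 1
    rw [hψa, inflow_eq_of_dist_le hG _ _ (hsupp n)
      (by rw [dist_of_mem_children hG (hx n), hu])]
    simp [dipole, hxy n]
  · refine dO_eq_zero hdO fun w => ?_
    rw [tsum_dartsFrom (edgeFlow hG o ε (dipole (x n) (y n))) w,
      sum_edgeFlow_neighborFinset hG _ hc2, sum_dipole_children hG (hx n) (hy n)]
  · exact fun e => edgeFlow_swap hG _ hε e.adj

lemma not_finiteDimensional_of_forall_symm_mem {dO : lA G →L[ℂ] lV V} (hdO : IsBoundaryO G dO)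
    {ε : ℂ} (hε : ε ^ 2 = 1) {K : Submodule ℂ (lA G)}
    (hK : ∀ ψ : lA G, dO ψ = 0 → (∀ e : G.Dart, ψ e.symm = ε * ψ e) → ψ ∈ K) :
    ¬FiniteDimensional ℂ K := by
  intro hfin
  obtain ⟨ψ, hli, hψ⟩ := exists_linearIndependent_symm_flows hG hc2 hdO hε
  exact Module.Finite.not_linearIndependent_of_infinite
    (fun n => (⟨ψ n, hK _ (hψ n).1 (hψ n).2⟩ : K)) (LinearIndependent.of_comp K.subtype hli)

end Eigenvectors

/-- if every degree is at least 3, then `1` and `−1` are eigenvalues of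
the Grover walk `U`; `ker(U − 1) ⊇ ker(d_O) ∩ H^(−)`, `ker(U + 1) ⊇ ker(d_O) ∩ H^(+)`,
and both `ker(U − 1)` and `ker(U + 1)` are infinite dimensional. -/
theorem statement8 {V : Type} (G : SimpleGraph V) [∀ v : V, Fintype (G.neighborSet v)]
    (hG : G.IsTree) [Infinite V]
    (hdeg : ∀ v : V, 3 ≤ G.degree v)
    (dT dO : lA G →L[ℂ] lV V) (S : lA G →L[ℂ] lA G)
    (hdT : IsBoundaryT G dT) (hdO : IsBoundaryO G dO) (hS : IsShift G S) :
    (∃ ψ : lA G, ψ ≠ 0 ∧ grover G S dT ψ = ψ) ∧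
    (∃ ψ : lA G, ψ ≠ 0 ∧ grover G S dT ψ = -ψ) ∧
    (∀ ψ : lA G, dO ψ = 0 → (∀ e : G.Dart, ψ e.symm = -ψ e) →
      ψ ∈ LinearMap.ker ((grover G S dT).toLinearMap - 1)) ∧
    (∀ ψ : lA G, dO ψ = 0 → (∀ e : G.Dart, ψ e.symm = ψ e) →
      ψ ∈ LinearMap.ker ((grover G S dT).toLinearMap + 1)) ∧
    ¬ FiniteDimensional ℂ (LinearMap.ker ((grover G S dT).toLinearMap - 1)) ∧
    ¬ FiniteDimensional ℂ (LinearMap.ker ((grover G S dT).toLinearMap + 1)) := by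
  obtain ⟨o⟩ := hG.connected.nonempty
  have hc2 := two_le_card_children hG (o := o) hdeg
  have hfix : ∀ ψ : lA G, dO ψ = 0 → (∀ e : G.Dart, ψ e.symm = -ψ e) →
      ψ ∈ LinearMap.ker ((grover G S dT).toLinearMap - 1) := fun ψ hO hsym => by
    simp [grover_apply_of_symm hdT hdO hS (ε := -1) hO (by simpa using hsym)]
  have hflip : ∀ ψ : lA G, dO ψ = 0 → (∀ e : G.Dart, ψ e.symm = ψ e) →
      ψ ∈ LinearMap.ker ((grover G S dT).toLinearMap + 1) := fun ψ hO hsym => by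
    simp [grover_apply_of_symm hdT hdO hS (ε := 1) hO (by simpa using hsym)]
  have hfix_inf := not_finiteDimensional_of_forall_symm_mem hG hc2 hdO (ε := -1) (by norm_num)
    fun ψ hO hsym => hfix ψ hO (by simpa using hsym)
  have hflip_inf := not_finiteDimensional_of_forall_symm_mem hG hc2 hdO (ε := 1) (by norm_num)
    fun ψ hO hsym => hflip ψ hO (by simpa using hsym)
  obtain ⟨ψ₁, hψ₁, hψ₁0⟩ := exists_mem_ne_zero_of_not_finiteDimensional hfix_inf
  obtain ⟨ψ₂, hψ₂, hψ₂0⟩ := exists_mem_ne_zero_of_not_finiteDimensional hflip_inf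
  refine ⟨⟨ψ₁, hψ₁0, ?_⟩, ⟨ψ₂, hψ₂0, ?_⟩, hfix, hflip, hfix_inf, hflip_inf⟩
  · simpa [sub_eq_zero] using hψ₁
  · simpa [add_eq_zero_iff_eq_neg] using hψ₂
end GroverStmt
end
end
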